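/- arXiv:2203.14173 — 4 statements merged into one kernel-verified Lean document; each statement's English description precedes it below -/
import Mathlib

section
/- The origami flip graph OFG(A_{2n}) is connected: for any two valid MV assignments μ, ν of A_{2n}, there is a finite sequence of face flips transforming μ into ν such that every intermediate assignment is valid. -/
/-
An assignment with `c` entries `-1` has sum `2n - 2c`, so the valid ones are those
with `c = n ± 1`. Flipping a face whose two creases carry `+1, -1` swaps them: it keeps the sum,
and it moves the `-1` one step towards index `0`, decreasing the sum of the positions of the
`-1` entries. Repeating this sorts every valid assignment into the one whose first `c` entries
are `-1`, and the two sorted assignments with `c = n - 1` and `c = n + 1` differ by the single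
flip of the face `α_{n-1}`.
-/

/-- The cyclically next crease index: `k + 1` taken modulo `2n`. -/
def nextCrease {n : ℕ} (k : Fin (2 * n)) : Fin (2 * n) :=
  ⟨(k.val + 1) % (2 * n), Nat.mod_lt _ (Nat.lt_of_le_of_lt (Nat.zero_le _) k.isLt)⟩

/-- Flipping face `α_k`: negate the MV assignment on the two bordering creases
`e_k` and `e_{k+1}` (indices taken cyclically mod `2n`). -/
def faceFlip {n : ℕ} (k : Fin (2 * n)) (μ : Fin (2 * n) → ℤ) : Fin (2 * n) → ℤ :=
  fun i => if i = k ∨ i = nextCrease k then -μ i else μ i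

/-- Applying a finite sequence of face flips in order. -/
def applyFlips {n : ℕ} (L : List (Fin (2 * n))) (μ : Fin (2 * n) → ℤ) : Fin (2 * n) → ℤ :=
  L.foldl (fun η k => faceFlip k η) μ

/-- A valid MV assignment of `A_{2n}`: sum of creases is `±2` (Maekawa). -/
def ValidSum {n : ℕ} (μ : Fin (2 * n) → ℤ) : Prop :=
  (∑ i, μ i) = 2 ∨ (∑ i, μ i) = -2

open Finset Relation

theorem Fin.isLowerSet_of_pred_mem {m : ℕ} {s : Set (Fin m)}
    (hs : ∀ a j : Fin m, a.val + 1 = j.val → j ∈ s → a ∈ s) : IsLowerSet s := by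
  intro j i hij hj
  obtain ⟨d, hd⟩ := Nat.exists_eq_add_of_le (Fin.le_def.mp hij)
  clear hij
  induction d generalizing j with
  | zero => exact (Fin.ext (by omega) : j = i) ▸ hj
  | succ d ih => exact ih (hs ⟨i.val + d, by omega⟩ j (by simp [hd]; omega) hj) rfl

theorem Fin.mem_iff_val_lt_card_of_isLowerSet {m : ℕ} {s : Finset (Fin m)}
    (hs : IsLowerSet (s : Set (Fin m))) (i : Fin m) : i ∈ s ↔ i.val < #s := by
  constructor
  · intro hi
    have : Iic i ⊆ s := fun j hj => hs (mem_Iic.mp hj) hi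
    simpa using card_le_card this
  · intro hi
    by_contra hi'
    have : s ⊆ Iio i := fun j hj => mem_Iio.mpr (lt_of_not_ge fun hij => hi' (hs hij hj))
    have := card_le_card this
    simp only [Fin.card_Iio] at this
    omega

section FlipGraph

variable {n : ℕ}

def IsMV (μ : Fin (2 * n) → ℤ) : Prop := ∀ i, μ i = 1 ∨ μ i = -1

def IsValidFlip (μ ν : Fin (2 * n) → ℤ) : Prop :=
  ValidSum μ ∧ ValidSum ν ∧ ∃ k, faceFlip k μ = ν

def negCount (μ : Fin (2 * n) → ℤ) : ℕ := #{i | μ i = -1}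

def negIndexSum (μ : Fin (2 * n) → ℤ) : ℕ := ∑ i, if μ i = -1 then i.val else 0

def sortedMV (p : ℕ) : Fin (2 * n) → ℤ := fun i => if i.val < p then -1 else 1

theorem faceFlip_faceFlip (k : Fin (2 * n)) (μ : Fin (2 * n) → ℤ) :
    faceFlip k (faceFlip k μ) = μ := by
  funext i
  by_cases h : i = k ∨ i = nextCrease k <;> simp [faceFlip, h]

instance : Std.Symm (IsValidFlip (n := n)) where
  symm _ _ := fun ⟨hμ, hν, k, hk⟩ => ⟨hν, hμ, k, hk ▸ faceFlip_faceFlip k _⟩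

theorem exists_flips_of_reflTransGen {μ ν : Fin (2 * n) → ℤ}
    (h : ReflTransGen IsValidFlip μ ν) (hμ : ValidSum μ) :
    ∃ L : List (Fin (2 * n)),
      (∀ M : List (Fin (2 * n)), M <+: L → ValidSum (applyFlips M μ)) ∧
      applyFlips L μ = ν := by
  induction h using ReflTransGen.head_induction_on with
  | refl => exact ⟨[], fun M hM => List.prefix_nil.mp hM ▸ hμ, rfl⟩
  | head hstep _ ih =>
    obtain ⟨hμ, hμ', k, rfl⟩ := hstep
    obtain ⟨L, hL, rfl⟩ := ih hμ'
    refine ⟨k :: L, fun M hM => ?_, rfl⟩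
    cases M with
    | nil => exact hμ
    | cons _ M =>
      obtain ⟨rfl, hML⟩ := List.cons_prefix_cons.mp hM
      exact hL M hML

theorem nextCrease_eq_of_val_succ {a j : Fin (2 * n)} (h : a.val + 1 = j.val) :
    nextCrease a = j :=
  Fin.ext (by simp only [nextCrease, h, Nat.mod_eq_of_lt j.isLt])

theorem IsMV.faceFlip {μ : Fin (2 * n) → ℤ} (hμ : IsMV μ) (k : Fin (2 * n)) :
    IsMV (faceFlip k μ) := by
  intro i
  unfold _root_.faceFlip
  split_ifs
  · rcases hμ i with h | h <;> simp [h]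
  · exact hμ i

theorem faceFlip_eq_comp_swap {μ : Fin (2 * n) → ℤ} {k : Fin (2 * n)}
    (h : μ (nextCrease k) = -μ k) : faceFlip k μ = μ ∘ Equiv.swap k (nextCrease k) := by
  funext i
  by_cases hk : i = k
  · subst hk; simp [faceFlip, h]
  · by_cases hk' : i = nextCrease k
    · subst hk'; simp [faceFlip, h]
    · simp [faceFlip, hk, hk', Equiv.swap_apply_of_ne_of_ne]

theorem IsMV.sum_eq {μ : Fin (2 * n) → ℤ} (hμ : IsMV μ) :
    ∑ i, μ i = 2 * n - 2 * negCount μ := by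
  have hpt : ∀ i, μ i = 1 - 2 * (if μ i = -1 then 1 else 0) := fun i => by
    rcases hμ i with h | h <;> simp [h]
  rw [Finset.sum_congr rfl fun i _ => hpt i, Finset.sum_sub_distrib, ← Finset.mul_sum,
    negCount, Finset.card_filter]
  simp

theorem IsMV.validSum_iff {μ : Fin (2 * n) → ℤ} (hμ : IsMV μ) :
    ValidSum μ ↔ (negCount μ : ℤ) = n - 1 ∨ (negCount μ : ℤ) = n + 1 := by
  rw [ValidSum, hμ.sum_eq]
  omega

theorem negIndexSum_comp_swap_lt {μ : Fin (2 * n) → ℤ} {a j : Fin (2 * n)} (haj : a < j)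
    (ha : μ a = 1) (hj : μ j = -1) : negIndexSum (μ ∘ Equiv.swap a j) < negIndexSum μ := by
  set σ := Equiv.swap a j
  have hreindex : negIndexSum (μ ∘ σ) = ∑ i, if μ i = -1 then (σ i).val else 0 := by
    rw [← Equiv.sum_comp σ]
    simp [negIndexSum, σ]
  rw [hreindex, negIndexSum]
  -- after reindexing, each `-1` entry `i` contributes `σ i ≤ i`, and `σ j = a < j`
  refine Finset.sum_lt_sum (fun i _ => ?_) ⟨j, mem_univ j, ?_⟩
  · split_ifs with hi
    · have : i ≠ a := by rintro rfl; simp_all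
      rw [Equiv.swap_apply_def]
      split_ifs <;> simp_all [le_of_lt]
    · rfl
  · simp [hj, σ, haj]

theorem isMV_sortedMV (p : ℕ) : IsMV (sortedMV (n := n) p) := fun i => by
  unfold _root_.sortedMV; split_ifs <;> simp

theorem negCount_sortedMV (p : ℕ) : negCount (sortedMV (n := n) p) = min (2 * n) p := by
  rw [negCount, ← Fin.card_filter_val_lt]
  congr 1
  ext i
  simp [sortedMV]

theorem IsMV.eq_sortedMV {μ : Fin (2 * n) → ℤ} (hμ : IsMV μ)
    (hlow : IsLowerSet {i | μ i = -1}) : μ = sortedMV (negCount μ) := by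
  funext i
  have hmem := Fin.mem_iff_val_lt_card_of_isLowerSet (s := {i | μ i = -1})
    (by simpa using hlow) i
  simp only [mem_filter, mem_univ, true_and] at hmem
  rw [sortedMV, negCount, if_congr hmem.symm rfl rfl]
  rcases hμ i with h | h <;> simp [h]

theorem faceFlip_sortedMV (k : Fin (2 * n)) (hk : k.val + 1 < 2 * n) :
    faceFlip k (sortedMV k.val) = sortedMV (k.val + 2) := by
  have hnext : nextCrease k = ⟨k.val + 1, hk⟩ := nextCrease_eq_of_val_succ rfl
  funext i
  simp only [faceFlip, hnext, sortedMV, Fin.ext_iff]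
  split_ifs <;> omega

theorem isValidFlip_sortedMV (hn : 1 ≤ n) :
    IsValidFlip (sortedMV (n := n) (n - 1)) (sortedMV (n + 1)) := by
  have hvalid : ∀ p, p ≤ 2 * n → ((p : ℤ) = n - 1 ∨ (p : ℤ) = n + 1) →
      ValidSum (sortedMV (n := n) p) := fun p hp h => by
    rwa [(isMV_sortedMV p).validSum_iff, negCount_sortedMV, min_eq_right hp]
  refine ⟨hvalid _ (by omega) (by omega), hvalid _ (by omega) (by omega), ⟨n - 1, by omega⟩, ?_⟩
  convert faceFlip_sortedMV (n := n) ⟨n - 1, by omega⟩ (by simp; omega) using 2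
  simp; omega

theorem reflTransGen_sortedMV_negCount {μ : Fin (2 * n) → ℤ} (hμ : IsMV μ) (hv : ValidSum μ) :
    ReflTransGen IsValidFlip μ (sortedMV (negCount μ)) := by
  induction hw : negIndexSum μ using Nat.strong_induction_on generalizing μ with
  | _ w ih =>
  by_cases hdesc : ∃ a j : Fin (2 * n), a.val + 1 = j.val ∧ μ a = 1 ∧ μ j = -1
  · obtain ⟨a, j, haj, ha, hj⟩ := hdesc
    have hnext : nextCrease a = j := nextCrease_eq_of_val_succ haj
    have hswap : faceFlip a μ = μ ∘ Equiv.swap a j := by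
      rw [← hnext]; exact faceFlip_eq_comp_swap (by rw [hnext, ha, hj])
    have hsum : ∑ i, faceFlip a μ i = ∑ i, μ i := by
      rw [hswap]; exact Equiv.sum_comp _ μ
    have hμ' := hμ.faceFlip a
    have hv' : ValidSum (faceFlip a μ) := by rw [ValidSum, hsum]; exact hv
    have hcount : negCount (faceFlip a μ) = negCount μ := by
      have := hμ'.sum_eq; rw [hsum, hμ.sum_eq] at this; omega
    have hlt : negIndexSum (faceFlip a μ) < w :=
      hw ▸ hswap ▸ negIndexSum_comp_swap_lt (Fin.lt_def.mpr (by omega)) ha hj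
    exact .head ⟨hv, hv', a, rfl⟩ (hcount ▸ ih _ hlt hμ' hv' rfl)
  · push Not at hdesc
    have hlow : IsLowerSet {i | μ i = -1} := Fin.isLowerSet_of_pred_mem fun a j haj hj =>
      (hμ a).resolve_left fun ha => hdesc a j haj ha hj
    rw [← hμ.eq_sortedMV hlow]

theorem reflTransGen_sortedMV {μ : Fin (2 * n) → ℤ} (hμ : IsMV μ) (hv : ValidSum μ) :
    ReflTransGen IsValidFlip μ (sortedMV (n - 1)) := by
  have h := reflTransGen_sortedMV_negCount hμ hv
  have hle : negCount μ ≤ 2 * n := (card_filter_le _ _).trans (by simp)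
  rcases hμ.validSum_iff.mp hv with hc | hc
  · rwa [show negCount μ = n - 1 by omega] at h
  · rw [show negCount μ = n + 1 by omega] at h
    exact h.tail (Std.Symm.symm _ _ (isValidFlip_sortedMV (by omega)))

end FlipGraph

theorem stmt_6_general (n : ℕ) (μ ν : Fin (2 * n) → ℤ)
    (hμmv : ∀ i, μ i = 1 ∨ μ i = -1) (hνmv : ∀ i, ν i = 1 ∨ ν i = -1)
    (hμvalid : ValidSum μ) (hνvalid : ValidSum ν) :
    ∃ L : List (Fin (2 * n)),
      (∀ M : List (Fin (2 * n)), M <+: L → ValidSum (applyFlips M μ)) ∧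
      applyFlips L μ = ν :=
  exists_flips_of_reflTransGen ((reflTransGen_sortedMV hμmv hμvalid).trans
    (Std.Symm.symm _ _ (reflTransGen_sortedMV hνmv hνvalid))) hμvalid

/-- `OFG(A_{2n})` is connected: any two valid MV assignments are joined by a
finite sequence of face flips all of whose intermediate assignments are valid. -/
theorem stmt_6 (n : ℕ) (hn : 1 ≤ n) (μ ν : Fin (2 * n) → ℤ)
    (hμmv : ∀ i, μ i = 1 ∨ μ i = -1) (hνmv : ∀ i, ν i = 1 ∨ ν i = -1)
    (hμvalid : ValidSum μ) (hνvalid : ValidSum ν) :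
    ∃ L : List (Fin (2 * n)),
      (∀ M : List (Fin (2 * n)), M <+: L → ValidSum (applyFlips M μ)) ∧
      applyFlips L μ = ν :=
  stmt_6_general n μ ν hμmv hνmv hμvalid hνvalid
end

section
/- For any two valid MV assignments μ, ν of A_{2n}, there is a sequence of at most n face flips transforming μ into ν through valid assignments; i.e., the distance between μ and ν in OFG(A_{2n}) is at most n. -/
/-!
Flipping a set `F` of faces negates exactly the creases on the boundary of `F` in the cycle, since
a crease is negated once for each of its two faces lying in `F`. The creases where two valid
assignments differ form a set `D` of even size, because the two sums differ by `0` or `±4`. Every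
even set of creases is a boundary: `D` is the boundary of the set of faces `k` such that `[0, k]`
contains an odd number of elements of `D`. A set of faces and its complement have the same
boundary, so one of them has at most `n` faces.

The faces of `F` can be flipped one at a time through valid assignments. If no face of `F` could
be flipped without losing validity, both creases of every face of `F` would carry the sign
opposite to the sum `s`; flipping all of `F` would then give the sum `s (1 + |∂F|)`, which is
valid only if `F` has no boundary, i.e. `F` consists of all faces, and then `s` itself would be
`∓2n`.
-/

open Finset
open scoped symmDiff

namespace MVAssignment

lemma even_card_of_even_sum {ι : Type*} {S : Finset ι} {η : ι → ℤ}
    (hη : ∀ i ∈ S, η i = 1 ∨ η i = -1) (h : Even (∑ i ∈ S, η i)) : Even #S := by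
  have hsum : Even (∑ i ∈ S, (η i + 1)) :=
    even_sum _ fun i hi => by rcases hη i hi with h | h <;> simp [h]
  rw [sum_add_distrib, sum_const, nsmul_one] at hsum
  exact_mod_cast (Int.even_add.mp hsum).mp h

section negOn

variable {ι : Type*} [DecidableEq ι]

def negOn (S : Finset ι) (η : ι → ℤ) : ι → ℤ :=
  fun i => if i ∈ S then -η i else η i

lemma negOn_empty (η : ι → ℤ) : negOn ∅ η = η := by
  ext i; simp [negOn]

lemma negOn_negOn (S T : Finset ι) (η : ι → ℤ) : negOn S (negOn T η) = negOn (S ∆ T) η := by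
  ext i
  by_cases hS : i ∈ S <;> by_cases hT : i ∈ T <;> simp [negOn, mem_symmDiff, hS, hT]

lemma negOn_eq_one_or_neg_one {η : ι → ℤ} (hη : ∀ i, η i = 1 ∨ η i = -1) (S : Finset ι)
    (i : ι) : negOn S η i = 1 ∨ negOn S η i = -1 := by
  unfold negOn
  split_ifs <;> rcases hη i with h | h <;> simp [h]

lemma eq_negOn_of_eq_one_or_neg_one [Fintype ι] {μ ν : ι → ℤ}
    (hμ : ∀ i, μ i = 1 ∨ μ i = -1) (hν : ∀ i, ν i = 1 ∨ ν i = -1) :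
    ν = negOn {i | μ i ≠ ν i} μ := by
  ext i
  simp only [negOn, mem_filter, mem_univ, true_and]
  split_ifs <;> rcases hμ i with h | h <;> rcases hν i with h' | h' <;> omega

lemma sum_negOn [Fintype ι] (S : Finset ι) (η : ι → ℤ) :
    ∑ i, negOn S η i = ∑ i, η i - 2 * ∑ i ∈ S, η i := by
  have h : ∀ i, negOn S η i = η i - 2 * if i ∈ S then η i else 0 := by
    intro i; unfold negOn; split_ifs <;> ring
  rw [sum_congr rfl fun i _ => h i, sum_sub_distrib, ← mul_sum, sum_ite_mem, univ_inter]

end negOn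

section Cycle

variable {m : ℕ} [NeZero m]

lemma le_zero_sub_one (d : Fin m) : d ≤ 0 - 1 := by
  rw [Fin.le_def, Fin.sub_def]
  have := d.isLt
  rcases Nat.lt_or_ge 1 m with h | h
  · simp [Nat.one_mod_eq_one.mpr h.ne', Nat.mod_eq_of_lt (Nat.sub_lt h.le one_pos)]
    omega
  · simp
    omega

lemma le_sub_one_iff_lt {d i : Fin m} (hi : i ≠ 0) : d ≤ i - 1 ↔ d < i := by
  rw [Fin.le_def, Fin.lt_def, Fin.val_sub_one_of_ne_zero hi]
  have : i.val ≠ 0 := Fin.val_ne_iff.mpr hi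
  omega

-- Face `k` lies between creases `k` and `k + 1`, so crease `i` borders faces `i - 1` and `i`.
def boundary (F : Finset (Fin m)) : Finset (Fin m) :=
  {i | ¬(i ∈ F ↔ i - 1 ∈ F)}

lemma mem_boundary {F : Finset (Fin m)} {i : Fin m} :
    i ∈ boundary F ↔ ¬(i ∈ F ↔ i - 1 ∈ F) := by
  simp [boundary]

lemma boundary_empty : boundary (∅ : Finset (Fin m)) = ∅ := by
  simp [boundary]

lemma boundary_symmDiff (F G : Finset (Fin m)) : boundary (F ∆ G) = boundary F ∆ boundary G := by
  ext i
  simp only [mem_boundary, mem_symmDiff]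
  tauto

lemma boundary_compl (F : Finset (Fin m)) : boundary Fᶜ = boundary F := by
  ext i
  simp only [mem_boundary, mem_compl]
  tauto

lemma boundary_singleton (h : (1 : Fin m) ≠ 0) (k : Fin m) : boundary {k} = {k, k + 1} := by
  ext i
  simp only [mem_boundary, mem_singleton, mem_insert, sub_eq_iff_eq_add]
  have hk : k ≠ k + 1 := fun hk => h (left_eq_add.mp hk)
  constructor
  · tauto
  · rintro (rfl | rfl) <;> simp [hk, hk.symm]

lemma eq_univ_of_boundary_eq_empty {F : Finset (Fin m)} (hF : F.Nonempty)
    (h : boundary F = ∅) : F = univ := by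
  obtain ⟨k, hk⟩ := hF
  have hstep : ∀ i, i - 1 ∈ F → i ∈ F := fun i hi => by
    by_contra hi'
    exact eq_empty_iff_forall_notMem.mp h i (mem_boundary.mpr (by tauto))
  have hreach : ∀ t : ℕ, ∀ j : Fin m, (j - k).val = t → j ∈ F := by
    intro t
    induction t with
    | zero => exact fun j hj => sub_eq_zero.mp (Fin.ext hj) ▸ hk
    | succ t ih =>
      intro j hj
      refine hstep j (ih _ ?_)
      rw [sub_right_comm, Fin.val_sub_one_of_ne_zero (Fin.ne_of_val_ne (by simp [hj])), hj]
      rfl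
  exact eq_univ_of_forall fun j => hreach _ j rfl

lemma exists_boundary_eq {D : Finset (Fin m)} (hD : Even #D) : ∃ F, boundary F = D := by
  refine ⟨({i | Odd #{d ∈ D | d ≤ i}} : Finset (Fin m)), ?_⟩
  ext i
  simp only [mem_boundary, mem_filter, mem_univ, true_and]
  by_cases hi : i = 0
  · subst hi
    have hzero : {d ∈ D | d ≤ 0} = {d ∈ D | d = 0} := filter_congr fun d _ => nonpos_iff_eq_zero
    have hlast : {d ∈ D | d ≤ 0 - 1} = D := filter_true_of_mem fun d _ => le_zero_sub_one d
    rw [hzero, filter_eq', hlast]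
    by_cases h : 0 ∈ D <;> simp [h, ← Nat.not_even_iff_odd, hD]
  · have hsplit : {d ∈ D | d ≤ i} = {d ∈ D | d ≤ i - 1} ∪ {d ∈ D | d = i} := by
      rw [← filter_or]
      exact filter_congr fun d _ => by rw [le_sub_one_iff_lt hi, le_iff_lt_or_eq]
    have hdisj : Disjoint {d ∈ D | d ≤ i - 1} {d ∈ D | d = i} :=
      disjoint_filter.mpr fun d _ h h' => (le_sub_one_iff_lt hi).mp h |>.ne h'
    rw [hsplit, card_union_of_disjoint hdisj, filter_eq']
    by_cases h : i ∈ D <;> simp [h, Nat.odd_add_one, ← Nat.not_even_iff_odd]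

end Cycle

section Crease

variable {n : ℕ}

lemma applyFlips_cons (k : Fin (2 * n)) (L : List (Fin (2 * n))) (η : Fin (2 * n) → ℤ) :
    applyFlips (k :: L) η = applyFlips L (faceFlip k η) := rfl

variable [NeZero n]

lemma nextCrease_eq_add_one (k : Fin (2 * n)) : nextCrease k = k + 1 := by
  ext
  simp [nextCrease, Fin.val_add]

lemma one_ne_zero_fin_two_mul : (1 : Fin (2 * n)) ≠ 0 := by
  simp [Fin.ext_iff]

lemma faceFlip_eq_negOn_boundary (k : Fin (2 * n)) (η : Fin (2 * n) → ℤ) :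
    faceFlip k η = negOn (boundary {k}) η := by
  ext i
  simp [faceFlip, negOn, boundary_singleton one_ne_zero_fin_two_mul, nextCrease_eq_add_one]

lemma exists_validSum_faceFlip {η : Fin (2 * n) → ℤ} (hη : ∀ i, η i = 1 ∨ η i = -1)
    (hv : ValidSum η) {F : Finset (Fin (2 * n))} (hF : F.Nonempty)
    (hvF : ValidSum (negOn (boundary F) η)) : ∃ k ∈ F, ValidSum (faceFlip k η) := by
  by_contra! hbad
  set s := ∑ i, η i
  have hs : s = 2 ∨ s = -2 := hv
  have hface : ∀ k ∈ F, 2 * η k = -s ∧ 2 * η (k + 1) = -s := by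
    intro k hk
    have h := hbad k hk
    have hk1 : k ≠ k + 1 := fun h => one_ne_zero_fin_two_mul (left_eq_add.mp h)
    rw [ValidSum, faceFlip_eq_negOn_boundary, boundary_singleton one_ne_zero_fin_two_mul, sum_negOn,
      sum_pair hk1] at h
    rcases hη k with h₁ | h₁ <;> rcases hη (k + 1) with h₂ | h₂ <;> omega
  have hbdry : ∀ i ∈ boundary F, 2 * η i = -s := by
    intro i hi
    by_cases hiF : i ∈ F
    · exact (hface i hiF).1
    · have hprev : i - 1 ∈ F := by have := mem_boundary.mp hi; tauto
      simpa using (hface _ hprev).2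
  have hsum : ∑ i, negOn (boundary F) η i = s * (1 + #(boundary F)) := by
    rw [sum_negOn, mul_sum, sum_congr rfl hbdry, sum_const, nsmul_eq_mul]
    ring
  have hempty : boundary F = ∅ := by
    rw [← card_eq_zero]
    unfold ValidSum at hvF
    rw [hsum] at hvF
    rcases hs with h | h <;> rw [h] at hvF <;> omega
  have huniv := eq_univ_of_boundary_eq_empty hF hempty
  have hsn : 2 * s = -(2 * n * s) := by
    calc 2 * s = ∑ i, 2 * η i := mul_sum ..
      _ = ∑ _i : Fin (2 * n), -s := sum_congr rfl fun i _ => (hface i (huniv ▸ mem_univ i)).1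
      _ = -(2 * n * s) := by simp
  rcases hs with h | h <;> rw [h] at hsn <;> omega

lemma exists_flip_sequence_of_validSum (F : Finset (Fin (2 * n))) {η : Fin (2 * n) → ℤ}
    (hη : ∀ i, η i = 1 ∨ η i = -1) (hv : ValidSum η) (hvF : ValidSum (negOn (boundary F) η)) :
    ∃ L : List (Fin (2 * n)), L.length = #F ∧
      (∀ M, M <+: L → ValidSum (applyFlips M η)) ∧ applyFlips L η = negOn (boundary F) η := by
  induction F using Finset.strongInduction generalizing η with
  | H F ih =>
  rcases F.eq_empty_or_nonempty with rfl | hF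
  · refine ⟨[], rfl, fun M hM => ?_, by simp [applyFlips, boundary_empty, negOn_empty]⟩
    rwa [List.prefix_nil.mp hM]
  obtain ⟨k, hk, hvk⟩ := exists_validSum_faceFlip hη hv hF hvF
  have hsplit : negOn (boundary F) η = negOn (boundary (F.erase k)) (faceFlip k η) := by
    rw [faceFlip_eq_negOn_boundary, negOn_negOn, ← boundary_symmDiff,
      (disjoint_singleton_right.mpr (notMem_erase k F)).symmDiff_eq_sup, sup_eq_union,
      union_singleton, insert_erase hk]
  have hηk : ∀ i, faceFlip k η i = 1 ∨ faceFlip k η i = -1 := by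
    rw [faceFlip_eq_negOn_boundary]
    exact negOn_eq_one_or_neg_one hη _
  obtain ⟨L, hlen, hpre, hL⟩ := ih _ (erase_ssubset hk) hηk hvk (hsplit ▸ hvF)
  refine ⟨k :: L, by simp [hlen, card_erase_add_one hk], ?_, by rw [applyFlips_cons, hL, hsplit]⟩
  intro M hM
  rcases List.prefix_cons_iff.mp hM with rfl | ⟨M', rfl, hM'⟩
  · exact hv
  · exact hpre M' hM'

end Crease

end MVAssignment

open MVAssignment in
/-- Any two valid MV assignments of `A_{2n}` are joined by a sequence of at
most `n` face flips through valid assignments: the distance in `OFG(A_{2n})` is at most `n`. -/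
theorem stmt_7 (n : ℕ) (hn : 1 ≤ n) (μ ν : Fin (2 * n) → ℤ)
    (hμmv : ∀ i, μ i = 1 ∨ μ i = -1) (hνmv : ∀ i, ν i = 1 ∨ ν i = -1)
    (hμvalid : ValidSum μ) (hνvalid : ValidSum ν) :
    ∃ L : List (Fin (2 * n)),
      L.length ≤ n ∧
      (∀ M : List (Fin (2 * n)), M <+: L → ValidSum (applyFlips M μ)) ∧
      applyFlips L μ = ν := by
  have : NeZero n := ⟨by omega⟩
  set D : Finset (Fin (2 * n)) := {i | μ i ≠ ν i}
  have hν : ν = negOn D μ := eq_negOn_of_eq_one_or_neg_one hμmv hνmv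
  have hD : Even #D := by
    refine even_card_of_even_sum (fun i _ => hμmv i) (Int.even_iff.mpr ?_)
    have hsum := sum_negOn D μ
    rw [← hν] at hsum
    unfold ValidSum at hμvalid hνvalid
    rcases hμvalid with h | h <;> rcases hνvalid with h' | h' <;> omega
  obtain ⟨F, hF, hFcard⟩ : ∃ F, boundary F = D ∧ #F ≤ n := by
    obtain ⟨F, hF⟩ := exists_boundary_eq hD
    by_cases h : #F ≤ n
    · exact ⟨F, hF, h⟩
    · refine ⟨Fᶜ, by rw [boundary_compl, hF], ?_⟩
      rw [card_compl, Fintype.card_fin]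
      omega
  obtain ⟨L, hlen, hpre, hL⟩ :=
    exists_flip_sequence_of_validSum F hμmv hμvalid (by rwa [hF, ← hν])
  exact ⟨L, hlen ▸ hFcard, hpre, by rw [hL, hF, hν]⟩
end

section
/- The diameter of OFG(A_{2n}) is exactly n: every pair of valid MV assignments is connected by a path of at most n face flips, and there exist valid MV assignments μ, ν whose distance in OFG(A_{2n}) is exactly n. -/
/-!
Flipping every face of a set `x` of faces once negates exactly the creases on its boundary
`∂x`, the creases between a face in `x` and a face outside `x`. Flips commute and are
involutions, so a sequence of `ℓ` flips acts as negation on `∂x` for some `x` with `#x ≤ ℓ`.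
The map `∂` is additive for symmetric difference with kernel `{∅, univ}`, so `∂x` determines
`x` up to complement.

Upper bound: two valid assignments differ on an even number of creases, so that set of creases is
some `∂x`, and after replacing `x` by its complement we may assume `#x ≤ n`. The faces of `x`
can be flipped one at a time through valid assignments: if each remaining face had both of its
creases of sign opposite to `∑ μ`, negating `∂x` would move the sum away from `±2`.

Lower bound: if `ν` differs from `μ` exactly at the antipodal creases `0` and `n`, any flip
sequence from `μ` to `ν` acts through the faces `0, …, n - 1` or their complement, both of size `n`.
-/

open Finset
open scoped symmDiff

section NegOn

variable {ι : Type*} [DecidableEq ι]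

def negOn (s : Finset ι) (μ : ι → ℤ) : ι → ℤ :=
  fun i => if i ∈ s then -μ i else μ i

@[simp]
theorem negOn_empty (μ : ι → ℤ) : negOn ∅ μ = μ := by
  funext i; simp [negOn]

theorem negOn_negOn (s t : Finset ι) (μ : ι → ℤ) : negOn s (negOn t μ) = negOn (s ∆ t) μ := by
  funext i
  by_cases hs : i ∈ s <;> by_cases ht : i ∈ t <;> simp [negOn, mem_symmDiff, hs, ht]

theorem negOn_pm {μ : ι → ℤ} (hμ : ∀ i, μ i = 1 ∨ μ i = -1) (s : Finset ι) (i : ι) :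
    negOn s μ i = 1 ∨ negOn s μ i = -1 := by
  have := hμ i
  unfold negOn; split_ifs <;> omega

theorem negOn_injective {μ : ι → ℤ} (hμ : ∀ i, μ i ≠ 0) {s t : Finset ι}
    (h : negOn s μ = negOn t μ) : s = t := by
  ext i
  have hi := congrFun h i
  have := hμ i
  by_cases hs : i ∈ s <;> by_cases ht : i ∈ t <;> simp [negOn, hs, ht] at hi ⊢ <;> omega

theorem negOn_filter_ne [Fintype ι] {μ ν : ι → ℤ} (hμ : ∀ i, μ i = 1 ∨ μ i = -1)
    (hν : ∀ i, ν i = 1 ∨ ν i = -1) : negOn {i | μ i ≠ ν i} μ = ν := by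
  funext i
  have := hμ i; have := hν i
  unfold negOn
  split_ifs with h <;> simp at h <;> omega

theorem sum_negOn [Fintype ι] (s : Finset ι) (μ : ι → ℤ) :
    ∑ i, negOn s μ i = ∑ i, μ i - 2 * ∑ i ∈ s, μ i := by
  have h : ∀ i, negOn s μ i = μ i - 2 * if i ∈ s then μ i else 0 := by
    intro i; unfold negOn; split_ifs <;> ring
  rw [sum_congr rfl fun i _ => h i, sum_sub_distrib, ← mul_sum, sum_ite_mem, univ_inter]

/-- `∑ μ - ∑ ν` is twice the sum of `μ` over the positions where `μ` and `ν` differ, and a sum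
of `±1`s has the parity of its number of terms. -/
theorem even_card_ne_of_four_dvd [Fintype ι] {μ ν : ι → ℤ} (hμ : ∀ i, μ i = 1 ∨ μ i = -1)
    (hν : ∀ i, ν i = 1 ∨ ν i = -1) (h : 4 ∣ ∑ i, μ i - ∑ i, ν i) :
    Even #{i | μ i ≠ ν i} := by
  set D : Finset ι := {i | μ i ≠ ν i}
  have hdiff : ∑ i, μ i - ∑ i, ν i = 2 * ∑ i ∈ D, μ i := by
    rw [← negOn_filter_ne hμ hν, sum_negOn]; ring
  have heven : Even (∑ i ∈ D, μ i) := by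
    rw [hdiff] at h
    exact even_iff_two_dvd.2 ((mul_dvd_mul_iff_left two_ne_zero).1 (by simpa using h))
  have hcast : ((∑ i ∈ D, μ i : ℤ) : ZMod 2) = (#D : ZMod 2) := by
    push_cast
    rw [card_eq_sum_ones, Nat.cast_sum, Nat.cast_one]
    refine sum_congr rfl fun i _ => ?_
    rcases hμ i with h | h <;> rw [h] <;> decide
  rw [← ZMod.natCast_eq_zero_iff_even, ← hcast, ZMod.intCast_eq_zero_iff_even]
  exact heven

end NegOn

section FaceBoundary

variable {m : ℕ} [NeZero m]

/-- Crease `i` separates faces `i - 1` and `i`, so it lies on the boundary of a set of faces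
exactly when one of these two faces belongs to it. -/
def faceBoundary (x : Finset (Fin m)) : Finset (Fin m) :=
  {i | ¬(i - 1 ∈ x ↔ i ∈ x)}

theorem mem_faceBoundary {x : Finset (Fin m)} {i : Fin m} :
    i ∈ faceBoundary x ↔ ¬(i - 1 ∈ x ↔ i ∈ x) := by
  simp [faceBoundary]

@[simp]
theorem faceBoundary_empty : faceBoundary (∅ : Finset (Fin m)) = ∅ := by
  ext; simp [mem_faceBoundary]

theorem faceBoundary_symmDiff (x y : Finset (Fin m)) :
    faceBoundary (x ∆ y) = faceBoundary x ∆ faceBoundary y := by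
  ext i; simp only [mem_faceBoundary, mem_symmDiff]; tauto

theorem faceBoundary_compl (x : Finset (Fin m)) : faceBoundary xᶜ = faceBoundary x := by
  ext i; simp only [mem_faceBoundary, mem_compl]; tauto

theorem Fin.self_ne_add_one (hm : 1 < m) (k : Fin m) : k ≠ k + 1 := by
  obtain ⟨m, rfl⟩ := Nat.exists_eq_add_of_lt hm
  simp

theorem faceBoundary_singleton (hm : 1 < m) (k : Fin m) : faceBoundary {k} = {k, k + 1} := by
  have hk := (Fin.self_ne_add_one hm k).symm
  ext i
  simp only [mem_faceBoundary, mem_singleton, mem_insert, sub_eq_iff_eq_add]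
  constructor
  · intro h; by_contra! h'; exact h (iff_of_false (fun h'' => h'.2 h'') h'.1)
  · rintro (rfl | rfl) <;> simp [hk, hk.symm]

theorem eq_empty_or_eq_univ_of_faceBoundary_eq_empty {z : Finset (Fin m)}
    (hz : faceBoundary z = ∅) : z = ∅ ∨ z = univ := by
  have hstep : ∀ j, j - 1 ∈ z ↔ j ∈ z := fun j => by
    by_contra h; simpa [hz] using mem_faceBoundary.2 h
  have hconst : ∀ j, j ∈ z ↔ 0 ∈ z := by
    obtain ⟨k, rfl⟩ := Nat.exists_eq_succ_of_ne_zero (NeZero.ne m)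
    intro j
    induction j using Fin.induction with
    | zero => rfl
    | succ i ih => rw [← hstep, ← ih]; simp [← Fin.coeSucc_eq_succ]
  by_cases h0 : 0 ∈ z
  · exact .inr (eq_univ_of_forall fun j => (hconst j).2 h0)
  · exact .inl (eq_empty_of_forall_notMem fun j hj => h0 ((hconst j).1 hj))

theorem eq_or_eq_compl_of_faceBoundary_eq {x y : Finset (Fin m)}
    (h : faceBoundary x = faceBoundary y) : x = y ∨ x = yᶜ := by
  have : faceBoundary (x ∆ y) = ∅ := by rw [faceBoundary_symmDiff, h, symmDiff_self, bot_eq_empty]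
  rcases eq_empty_or_eq_univ_of_faceBoundary_eq_empty this with h | h
  · exact .inl (symmDiff_eq_bot.1 h)
  · exact .inr ((symmDiff_eq_top _ _).1 h).eq_compl

theorem Fin.val_zero_sub_one : ((0 : Fin m) - 1).val = m - 1 := by
  obtain ⟨k, rfl⟩ := Nat.exists_eq_succ_of_ne_zero (NeZero.ne m)
  simp

theorem card_filter_le_eq_of_ne_zero (D : Finset (Fin m)) {i : Fin m} (hi : i ≠ 0) :
    #{j ∈ D | j ≤ i} = #{j ∈ D | j ≤ i - 1} + if i ∈ D then 1 else 0 := by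
  have hval := Fin.val_sub_one_of_ne_zero hi
  have hi0 : i.val ≠ 0 := Fin.val_ne_zero_iff.2 hi
  rw [card_filter, card_filter, ← sum_ite_eq' D i (fun _ => 1), ← sum_add_distrib]
  refine sum_congr rfl fun j _ => ?_
  split_ifs <;> simp only [Fin.le_iff_val_le_val, Fin.ext_iff, hval] at * <;> omega

/-- Take the faces `j` such that an odd number of the creases `0, …, j` lie in `D`. -/
theorem exists_faceBoundary_eq {D : Finset (Fin m)} (hD : Even #D) :
    ∃ x, faceBoundary x = D := by
  refine ⟨({j | Odd #{i ∈ D | i ≤ j}} : Finset (Fin m)), ?_⟩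
  ext i
  simp only [mem_faceBoundary, mem_filter, mem_univ, true_and]
  by_cases hi : i = 0
  · subst hi
    have hall : {j ∈ D | j ≤ 0 - 1} = D :=
      filter_true_of_mem fun j _ => by
        rw [Fin.le_iff_val_le_val, Fin.val_zero_sub_one]; omega
    have hzero : {j ∈ D | j ≤ 0} = if 0 ∈ D then {0} else ∅ := by
      ext j; split_ifs <;> simp <;> aesop
    rw [hall, hzero]
    split_ifs with h0 <;> simp [h0, ← Nat.not_even_iff_odd, hD]
  · rw [card_filter_le_eq_of_ne_zero D hi]
    split_ifs with hD' <;> simp [hD', Nat.odd_add_one, ← Nat.not_even_iff_odd]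

theorem exists_faceBoundary_eq_of_two_mul_card_le {D : Finset (Fin m)} (hD : Even #D) :
    ∃ x, faceBoundary x = D ∧ 2 * #x ≤ m := by
  obtain ⟨x, hx⟩ := exists_faceBoundary_eq hD
  have hcompl : #xᶜ = m - #x := by rw [card_compl, Fintype.card_fin]
  by_cases h : 2 * #x ≤ m
  · exact ⟨x, hx, h⟩
  · exact ⟨xᶜ, by rw [faceBoundary_compl, hx], by omega⟩

end FaceBoundary

theorem four_dvd_sub_of_validSum {n : ℕ} {μ ν : Fin (2 * n) → ℤ} (hμ : ValidSum μ)
    (hν : ValidSum ν) : 4 ∣ ∑ i, μ i - ∑ i, ν i := by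
  rcases hμ with h | h <;> rcases hν with h' | h' <;> rw [h, h'] <;> norm_num

theorem applyFlips_cons {n : ℕ} (k : Fin (2 * n)) (L : List (Fin (2 * n))) (μ : Fin (2 * n) → ℤ) :
    applyFlips (k :: L) μ = applyFlips L (faceFlip k μ) :=
  rfl

section Flips

variable {n : ℕ} [NeZero n]

theorem one_lt_two_mul_of_neZero : 1 < 2 * n := by
  have := NeZero.pos n; omega

theorem nextCrease_eq_add_one (k : Fin (2 * n)) : nextCrease k = k + 1 := by
  ext; simp [nextCrease, Fin.val_add]

theorem faceFlip_eq_negOn (k : Fin (2 * n)) (μ : Fin (2 * n) → ℤ) :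
    faceFlip k μ = negOn (faceBoundary {k}) μ := by
  rw [faceBoundary_singleton one_lt_two_mul_of_neZero]
  funext i; simp [faceFlip, negOn, nextCrease_eq_add_one]

/-- Flips commute and are involutions: `x` is the set of faces flipped an odd number of times. -/
theorem exists_applyFlips_eq_negOn (L : List (Fin (2 * n))) (μ : Fin (2 * n) → ℤ) :
    ∃ x : Finset (Fin (2 * n)), #x ≤ L.length ∧ applyFlips L μ = negOn (faceBoundary x) μ := by
  induction L generalizing μ with
  | nil => exact ⟨∅, by simp, by simp [applyFlips]⟩
  | cons k L ih =>
    obtain ⟨x, hx, hL⟩ := ih (faceFlip k μ)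
    refine ⟨x ∆ {k}, ?_, ?_⟩
    · calc #(x ∆ {k}) ≤ #x + #{k} := (card_le_card symmDiff_le_sup).trans (card_union_le _ _)
        _ ≤ (k :: L).length := by simpa using hx
    · rw [applyFlips_cons, hL, faceFlip_eq_negOn, negOn_negOn, faceBoundary_symmDiff]

theorem min_card_le_length_of_applyFlips_eq {μ : Fin (2 * n) → ℤ} (hμ : ∀ i, μ i ≠ 0)
    {L : List (Fin (2 * n))} {x : Finset (Fin (2 * n))}
    (h : applyFlips L μ = negOn (faceBoundary x) μ) : min #x #xᶜ ≤ L.length := by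
  obtain ⟨y, hy, hL⟩ := exists_applyFlips_eq_negOn L μ
  rcases eq_or_eq_compl_of_faceBoundary_eq (negOn_injective hμ (hL.symm.trans h)) with rfl | rfl
  · exact (min_le_left _ _).trans hy
  · exact (min_le_right _ _).trans hy

theorem two_mul_eq_neg_sum_of_not_validSum_faceFlip {μ : Fin (2 * n) → ℤ}
    (hμ : ∀ i, μ i = 1 ∨ μ i = -1) (hv : ValidSum μ) {k : Fin (2 * n)}
    (hk : ¬ValidSum (faceFlip k μ)) : 2 * μ k = -∑ i, μ i ∧ 2 * μ (k + 1) = -∑ i, μ i := by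
  rw [ValidSum, faceFlip_eq_negOn, faceBoundary_singleton one_lt_two_mul_of_neZero, sum_negOn,
    sum_pair (Fin.self_ne_add_one one_lt_two_mul_of_neZero k)] at hk
  rcases hv with h | h <;> rcases hμ k with h1 | h1 <;> rcases hμ (k + 1) with h2 | h2 <;> omega

/-- If every face of `x` were blocked, all creases on its boundary would carry the sign
opposite to `∑ μ`, and negating them would push the sum away from `±2`. -/
theorem exists_mem_validSum_faceFlip {x : Finset (Fin (2 * n))} (hne : x.Nonempty)
    (hx : x ≠ univ) {μ : Fin (2 * n) → ℤ} (hμ : ∀ i, μ i = 1 ∨ μ i = -1) (hv : ValidSum μ)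
    (hv' : ValidSum (negOn (faceBoundary x) μ)) : ∃ k ∈ x, ValidSum (faceFlip k μ) := by
  by_contra! hblocked
  set S := ∑ i, μ i with hS
  have hbd : ∀ i ∈ faceBoundary x, 2 * μ i = -S := by
    intro i hi
    by_cases h : i ∈ x
    · exact (two_mul_eq_neg_sum_of_not_validSum_faceFlip hμ hv (hblocked i h)).1
    · have h' : i - 1 ∈ x := by have := mem_faceBoundary.1 hi; tauto
      simpa using (two_mul_eq_neg_sum_of_not_validSum_faceFlip hμ hv (hblocked _ h')).2
  have hsum : ∑ i, negOn (faceBoundary x) μ i = S * (1 + #(faceBoundary x)) := by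
    rw [sum_negOn, mul_sum, sum_congr rfl hbd, sum_const, nsmul_eq_mul]; ring
  have hempty : faceBoundary x = ∅ := by
    rw [← card_eq_zero]
    unfold ValidSum at hv hv'
    rw [hsum] at hv'
    rcases hv with h | h <;> rw [hS, h] at hv' <;> omega
  rcases eq_empty_or_eq_univ_of_faceBoundary_eq_empty hempty with h | h
  exacts [hne.ne_empty h, hx h]

theorem exists_validPath_to_negOn {x : Finset (Fin (2 * n))} (hx : x ≠ univ)
    {μ : Fin (2 * n) → ℤ} (hμ : ∀ i, μ i = 1 ∨ μ i = -1) (hv : ValidSum μ)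
    (hv' : ValidSum (negOn (faceBoundary x) μ)) :
    ∃ L : List (Fin (2 * n)), L.length = #x ∧
      (∀ M, M <+: L → ValidSum (applyFlips M μ)) ∧
      applyFlips L μ = negOn (faceBoundary x) μ := by
  induction x using Finset.strongInduction generalizing μ with
  | H x ih =>
    rcases x.eq_empty_or_nonempty with rfl | hne
    · refine ⟨[], rfl, fun M hM => ?_, by simp [applyFlips]⟩
      rw [List.prefix_nil.1 hM]
      exact hv
    obtain ⟨k, hk, hvk⟩ := exists_mem_validSum_faceFlip hne hx hμ hv hv'
    have hrest :
        negOn (faceBoundary (x.erase k)) (faceFlip k μ) = negOn (faceBoundary x) μ := by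
      have hx' : x.erase k ∆ {k} = x := by
        ext i; by_cases hi : i = k <;> simp [mem_symmDiff, hi, hk]
      rw [faceFlip_eq_negOn, negOn_negOn, ← faceBoundary_symmDiff, hx']
    have hμk : ∀ i, faceFlip k μ i = 1 ∨ faceFlip k μ i = -1 := by
      rw [faceFlip_eq_negOn]; exact negOn_pm hμ _
    obtain ⟨L, hlen, hpath, hL⟩ := ih (x.erase k) (erase_ssubset hk)
      ((erase_ssubset hk).trans_le (subset_univ x)).ne hμk hvk (by rwa [hrest])
    refine ⟨k :: L, by simp [hlen, card_erase_add_one hk], fun M hM => ?_, by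
      rw [applyFlips_cons, hL, hrest]⟩
    rcases List.prefix_cons_iff.1 hM with rfl | ⟨M', rfl, hM'⟩
    exacts [hv, hpath M' hM']

theorem exists_validPath_length_le {μ ν : Fin (2 * n) → ℤ} (hμ : ∀ i, μ i = 1 ∨ μ i = -1)
    (hν : ∀ i, ν i = 1 ∨ ν i = -1) (hvμ : ValidSum μ) (hvν : ValidSum ν) :
    ∃ L : List (Fin (2 * n)), L.length ≤ n ∧
      (∀ M, M <+: L → ValidSum (applyFlips M μ)) ∧ applyFlips L μ = ν := by
  obtain ⟨x, hx, hcard⟩ := exists_faceBoundary_eq_of_two_mul_card_le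
    (even_card_ne_of_four_dvd hμ hν (four_dvd_sub_of_validSum hvμ hvν))
  have hxν : negOn (faceBoundary x) μ = ν := by rw [hx, negOn_filter_ne hμ hν]
  have hxu : x ≠ univ := by
    rintro rfl
    rw [card_univ, Fintype.card_fin] at hcard
    have := NeZero.pos n
    omega
  obtain ⟨L, hlen, hpath, hL⟩ := exists_validPath_to_negOn hxu hμ hvμ (hxν ▸ hvν)
  exact ⟨L, by omega, hpath, hL.trans hxν⟩

variable (n)

def midCrease : Fin (2 * n) :=
  ⟨n, by have := NeZero.pos n; omega⟩

def diameterStart : Fin (2 * n) → ℤ :=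
  negOn (Ioo 0 (midCrease n)) 1

def diameterEnd : Fin (2 * n) → ℤ :=
  negOn {0, midCrease n} (diameterStart n)

theorem faceBoundary_Iio_midCrease : faceBoundary (Iio (midCrease n)) = {0, midCrease n} := by
  ext i
  simp only [mem_faceBoundary, mem_Iio, mem_insert, mem_singleton, Fin.lt_def,
    Fin.ext_iff, midCrease, Fin.val_zero]
  by_cases hi : i = 0
  · subst hi
    rw [Fin.val_zero_sub_one]
    have := NeZero.pos n
    simp only [Fin.val_zero, true_or, iff_true]
    omega
  · rw [Fin.val_sub_one_of_ne_zero hi]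
    have := Fin.val_ne_zero_iff.2 hi
    omega

theorem diameterStart_pm (i : Fin (2 * n)) : diameterStart n i = 1 ∨ diameterStart n i = -1 :=
  negOn_pm (fun _ => .inl rfl) _ i

theorem diameterEnd_pm (i : Fin (2 * n)) : diameterEnd n i = 1 ∨ diameterEnd n i = -1 :=
  negOn_pm (diameterStart_pm n) _ i

theorem sum_diameterStart : ∑ i, diameterStart n i = 2 := by
  rw [diameterStart, sum_negOn]
  have := NeZero.pos n
  simp [Fin.card_Ioo, midCrease]
  omega

theorem validSum_diameterEnd : ValidSum (diameterEnd n) := by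
  right
  have h0 : (0 : Fin (2 * n)) ≠ midCrease n := by
    simp [Fin.ext_iff, midCrease, (NeZero.ne n).symm]
  rw [diameterEnd, sum_negOn, sum_pair h0, sum_diameterStart]
  simp [diameterStart, negOn]

variable {n}

theorem le_length_of_applyFlips_diameterStart_eq {L : List (Fin (2 * n))}
    (h : applyFlips L (diameterStart n) = diameterEnd n) : n ≤ L.length := by
  rw [diameterEnd, ← faceBoundary_Iio_midCrease] at h
  have := min_card_le_length_of_applyFlips_eq
    (fun i => by rcases diameterStart_pm n i with h | h <;> simp [h]) h
  simp only [card_compl, Fintype.card_fin, Fin.card_Iio, midCrease] at this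
  omega

end Flips

/-- The diameter of `OFG(A_{2n})` is exactly `n`: every pair of valid MV
assignments is joined by at most `n` face flips through valid assignments, and some pair
of valid MV assignments requires exactly `n` flips (every connecting sequence has length
at least `n`). -/
theorem stmt_8 (n : ℕ) (hn : 1 ≤ n) :
    (∀ μ ν : Fin (2 * n) → ℤ,
      (∀ i, μ i = 1 ∨ μ i = -1) → (∀ i, ν i = 1 ∨ ν i = -1) →
      ValidSum μ → ValidSum ν →
      ∃ L : List (Fin (2 * n)),
        L.length ≤ n ∧
        (∀ M : List (Fin (2 * n)), M <+: L → ValidSum (applyFlips M μ)) ∧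
        applyFlips L μ = ν) ∧
    (∃ μ ν : Fin (2 * n) → ℤ,
      (∀ i, μ i = 1 ∨ μ i = -1) ∧ (∀ i, ν i = 1 ∨ ν i = -1) ∧
      ValidSum μ ∧ ValidSum ν ∧
      ∀ L : List (Fin (2 * n)),
        (∀ M : List (Fin (2 * n)), M <+: L → ValidSum (applyFlips M μ)) →
        applyFlips L μ = ν → n ≤ L.length) := by
  have : NeZero n := ⟨by omega⟩
  exact ⟨fun _ _ hμ hν hvμ hvν => exists_validPath_length_le hμ hν hvμ hvν,
    diameterStart n, diameterEnd n, diameterStart_pm n, diameterEnd_pm n,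
    .inl (sum_diameterStart n), validSum_diameterEnd n,
    fun _ _ hL => le_length_of_applyFlips_diameterStart_eq hL⟩
end

section
/- For n ≥ 2 and n+2 ≤ k ≤ 2n, the number of valid MV assignments of A_{2n} having degree exactly k in OFG(A_{2n}) is (4n/(n+1)) * C(n+1, k-n-1) * C(n-2, k-n-2). -/
/-- MV assignments on `A_{2n}`: functions from the `2n` creases to `{-1, 1} ⊆ ℤ`. -/
abbrev MVAssign (n : ℕ) := Fin (2 * n) → ({-1, 1} : Finset ℤ)

/-- Validity (Maekawa for `A_{2n}`): the sum of the crease values is `±2`. -/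
def MVValid {n : ℕ} (μ : MVAssign n) : Prop :=
  (∑ i, (μ i : ℤ)) = 2 ∨ (∑ i, (μ i : ℤ)) = -2

instance {n : ℕ} : DecidablePred (MVValid (n := n)) := fun μ => by
  unfold MVValid; infer_instance

/-- The vertices of `OFG(A_{2n})`: valid MV assignments of `A_{2n}`. -/
abbrev OFGVertex (n : ℕ) := {μ : MVAssign n // MVValid μ}

/-- The origami flip graph `OFG(A_{2n})`: two valid MV assignments are adjacent iff one
is obtained from the other by flipping a single face, i.e. negating the values on the two
cyclically consecutive creases `e_k`, `e_{k+1}` bordering some face `α_k`. -/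
def OFG (n : ℕ) : SimpleGraph (OFGVertex n) where
  Adj a b := ∃ k : Fin (2 * n), ∀ i,
    (b.1 i : ℤ) = if i = k ∨ i = nextCrease k then -(a.1 i : ℤ) else (a.1 i : ℤ)
  symm := by
    constructor
    rintro a b ⟨k, h⟩
    refine ⟨k, fun i => ?_⟩
    by_cases hc : i = k ∨ i = nextCrease k
    · rw [if_pos hc, h i, if_pos hc, neg_neg]
    · rw [if_neg hc, h i, if_neg hc]
  loopless := by
    constructor
    rintro a ⟨k, h⟩
    have hk := h k
    rw [if_pos (Or.inl rfl)] at hk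
    have hm := (a.1 k).2
    simp only [Finset.mem_insert, Finset.mem_singleton] at hm
    rcases hm with hm | hm <;> rw [hm] at hk <;> norm_num at hk

/-!
Negating every crease is a degree-preserving involution of `OFG(A_{2n})` that exchanges the
assignments of sum `2` and `-2`, so it suffices to count those of sum `2`. Such an assignment
is determined by its set `M` of `n - 1` creases of value `-1`, and a face can be flipped unless
both of its creases lie in `M`; so its degree is `2n - (|M| - r) = n + 1 + r`, where `r` is the
number of cyclic runs of `M`.

The `m`-subsets of `ℤ/N` with `b` runs are counted by double counting the pairs `(S, p)` with
`p ∉ S`: rotating `p` to `-1` and cutting the cycle there leaves `m`-subsets of a path of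
`N - 1` points with `b` runs, and removing the last point of such a path gives a recursion
solved by `C(m - 1, b - 1) * C(N - m, b)`.
-/

open Finset

namespace Finset

variable {α β : Type*} [DecidableEq α] [DecidableEq β]

/-- The number of maximal runs `{i, i + 1, …, j}` of `S`, counted by their last elements;
in `Fin N` the runs are cyclic. -/
def runCount [Add α] [One α] (S : Finset α) : ℕ := #{i ∈ S | i + 1 ∉ S}

theorem runCount_map [Add α] [One α] [Add β] [One β] (f : α ↪ β) {S : Finset α}
    (hf : ∀ a ∈ S, f (a + 1) = f a + 1) : (S.map f).runCount = S.runCount := by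
  rw [runCount, runCount, filter_map, card_map]
  congr 1
  refine filter_congr fun a ha => ?_
  simp [← hf a ha]

theorem runCount_insert_of_forall_lt {T : Finset ℕ} {t : ℕ} (h : ∀ i ∈ T, i < t) :
    (insert t T).runCount = #{i ∈ T | i + 1 ∉ insert t T} + 1 := by
  have hend : t + 1 ∉ insert t T := by
    simp only [mem_insert, not_or]
    exact ⟨by omega, fun ht => by have := h _ ht; omega⟩
  have hnot : t ∉ {i ∈ T | i + 1 ∉ insert t T} := fun ht => (h t (mem_filter.1 ht).1).false
  rw [runCount, filter_insert, if_pos hend, card_insert_of_notMem hnot]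

theorem runCount_insert_of_forall_add_one_lt {T : Finset ℕ} {t : ℕ} (h : ∀ i ∈ T, i + 1 < t) :
    (insert t T).runCount = T.runCount + 1 := by
  rw [runCount_insert_of_forall_lt fun i hi => by have := h i hi; omega, runCount]
  congr 2
  refine filter_congr fun i hi => ?_
  simp [(h i hi).ne]

theorem runCount_insert_add_one_insert {T : Finset ℕ} {t : ℕ} (h : ∀ i ∈ T, i < t) :
    (insert (t + 1) (insert t T)).runCount = (insert t T).runCount := by
  rw [runCount_insert_of_forall_lt, runCount_insert_of_forall_lt h, filter_insert,
    if_neg (by simp)]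
  · congr 2
    refine filter_congr fun i hi => ?_
    simp [(h i hi).ne]
  · intro i hi
    rcases mem_insert.1 hi with rfl | hi
    · omega
    · have := h i hi; omega

theorem runCount_pos {T : Finset ℕ} (hT : T.Nonempty) : 0 < T.runCount :=
  card_pos.2 ⟨T.max' hT, mem_filter.2 ⟨max'_mem T hT, fun h => by
    have := le_max' T _ h; omega⟩⟩

theorem card_filter_powersetCard_range_succ (P : Finset ℕ → Prop) [DecidablePred P] (t m : ℕ) :
    #{T ∈ (range (t + 1)).powersetCard (m + 1) | P T}
      = #{T ∈ (range t).powersetCard (m + 1) | P T}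
        + #{T ∈ (range t).powersetCard m | P (insert t T)} := by
  rw [range_add_one, powersetCard_succ_insert notMem_range_self, filter_union,
    card_union_of_disjoint, filter_image, card_image_of_injOn]
  · intro T hT T' hT' h
    simp only [coe_filter, mem_powersetCard, Set.mem_ofPred_eq] at hT hT'
    rw [← erase_insert (fun ht => notMem_range_self (hT.1.1 ht)), h,
      erase_insert (fun ht => notMem_range_self (hT'.1.1 ht))]
  · rw [disjoint_left]
    intro T hT hT'
    simp only [mem_filter, mem_image, mem_powersetCard] at hT hT'
    obtain ⟨U, -, rfl⟩ := hT'.1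
    exact notMem_range_self (hT.1.1 (mem_insert_self t U))

theorem card_filter_not_and_add_one_mem [Fintype α] [Add α] [One α] (S : Finset α) :
    #{k | ¬(k ∈ S ∧ k + 1 ∈ S)} + #S = Fintype.card α + S.runCount := by
  have hS := card_filter_add_card_filter_not (s := S) (p := (· + 1 ∈ S))
  have huniv := card_filter_add_card_filter_not (s := univ) (p := fun k => k ∈ S ∧ k + 1 ∈ S)
  have hpairs : ({k | k ∈ S ∧ k + 1 ∈ S} : Finset α) = {k ∈ S | k + 1 ∈ S} := by ext; simp
  rw [hpairs, card_univ] at huniv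
  rw [runCount]
  omega

end Finset

def lineCount (t m b : ℕ) : ℕ := #{T ∈ (range t).powersetCard m | T.runCount = b}

def lineCountWithTop (t m b : ℕ) : ℕ :=
  #{T ∈ (range t).powersetCard m | (insert t T).runCount = b}

theorem lineCount_eq_zero_of_lt {t m : ℕ} (h : t < m) (b : ℕ) : lineCount t m b = 0 := by
  rw [lineCount, powersetCard_eq_empty.2 (by simpa using h), filter_empty, card_empty]

theorem lineCount_succ_zero (t m : ℕ) : lineCount t (m + 1) 0 = 0 := by
  refine card_eq_zero.2 (filter_eq_empty_iff.2 fun T hT => (runCount_pos ?_).ne')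
  exact card_pos.1 (by rw [(mem_powersetCard.1 hT).2]; omega)

theorem lineCountWithTop_zero (t b : ℕ) : lineCountWithTop t 0 b = if b = 1 then 1 else 0 := by
  rw [lineCountWithTop, powersetCard_zero, filter_singleton, insert_empty]
  have : ({t} : Finset ℕ).runCount = 1 := by simp [runCount, filter_singleton]
  split_ifs <;> simp_all

theorem lineCount_succ_succ (t m b : ℕ) :
    lineCount (t + 1) (m + 1) b = lineCount t (m + 1) b + lineCountWithTop t m b :=
  card_filter_powersetCard_range_succ _ t m

theorem lineCountWithTop_succ_succ (t m b : ℕ) :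
    lineCountWithTop (t + 1) (m + 1) (b + 1)
      = lineCountWithTop t m (b + 1) + lineCount t (m + 1) b := by
  rw [lineCountWithTop, card_filter_powersetCard_range_succ, add_comm]
  have bound : ∀ {T k}, T ∈ (range t).powersetCard k → ∀ i ∈ T, i < t := fun hT i hi =>
    mem_range.1 ((mem_powersetCard.1 hT).1 hi)
  congr 1
  · refine congrArg card (filter_congr fun T hT => ?_)
    rw [runCount_insert_add_one_insert (bound hT)]
  · refine congrArg card (filter_congr fun T hT => ?_)
    rw [runCount_insert_of_forall_add_one_lt fun i hi => by have := bound hT i hi; omega]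
    omega

theorem lineCount_add_of_lineCountWithTop {m b : ℕ}
    (h : ∀ r, lineCountWithTop (m + r) m (b + 1) = m.choose b * r.choose b) (r : ℕ) :
    lineCount (m + 1 + r) (m + 1) (b + 1) = m.choose b * (r + 1).choose (b + 1) := by
  induction r with
  | zero =>
    have h0 := h 0
    rw [add_zero] at h0
    rw [add_zero, lineCount_succ_succ, lineCount_eq_zero_of_lt (Nat.lt_succ_self m), h0]
    simp [Nat.choose_succ_succ]
  | succ r ih =>
    have hr : lineCountWithTop (m + r + 1) m (b + 1) = _ := h (r + 1)
    rw [← add_assoc, lineCount_succ_succ, ih, add_right_comm, hr,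
      Nat.choose_succ_succ (r + 1) b]
    ring

theorem lineCountWithTop_add (m r b : ℕ) :
    lineCountWithTop (m + r) m (b + 1) = m.choose b * r.choose b := by
  induction m generalizing r b with
  | zero => cases b <;> simp [lineCountWithTop_zero]
  | succ m ih =>
    rw [add_right_comm, lineCountWithTop_succ_succ, ih]
    rcases b with _ | b
    · simp [lineCount_succ_zero]
    rcases r with _ | r
    · simp [lineCount_eq_zero_of_lt]
    · rw [← add_assoc, add_right_comm, lineCount_add_of_lineCountWithTop (ih · b),
        Nat.choose_succ_succ m]
      ring

theorem lineCount_add (m r b : ℕ) :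
    lineCount (m + 1 + r) (m + 1) (b + 1) = m.choose b * (r + 1).choose (b + 1) :=
  lineCount_add_of_lineCountWithTop (lineCountWithTop_add m · b) r

def cyclicCount (N : ℕ) [NeZero N] (m b : ℕ) : ℕ :=
  #{S : Finset (Fin N) | #S = m ∧ S.runCount = b}

theorem map_valEmbedding_filter_val_mem {N : ℕ} {T : Finset ℕ} (hT : T ⊆ range N) :
    ({a : Fin N | a.val ∈ T} : Finset (Fin N)).map Fin.valEmbedding = T := by
  ext x
  refine ⟨fun hx => ?_, fun hx => ?_⟩
  · obtain ⟨a, ha, rfl⟩ := mem_map.1 hx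
    exact (mem_filter.1 ha).2
  · exact mem_map.2 ⟨⟨x, mem_range.1 (hT hx)⟩, by simpa using hx, rfl⟩

section Cyclic

variable {N : ℕ} [NeZero N]

theorem runCount_map_addRight (c : Fin N) (S : Finset (Fin N)) :
    (S.map (Equiv.addRight c).toEmbedding).runCount = S.runCount :=
  runCount_map _ fun a _ => add_right_comm a 1 c

theorem card_filter_notMem_eq (m b : ℕ) (p q : Fin N) :
    #{S : Finset (Fin N) | (#S = m ∧ S.runCount = b) ∧ p ∉ S}
      = #{S : Finset (Fin N) | (#S = m ∧ S.runCount = b) ∧ q ∉ S} := by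
  refine card_equiv (Equiv.addRight (q - p)).finsetCongr fun S => ?_
  simp [Equiv.finsetCongr_apply, runCount_map_addRight]

theorem val_add_one_lt_iff_ne_neg_one {a : Fin N} : a.val + 1 < N ↔ a ≠ -1 := by
  refine ⟨fun h ha => ?_, fun ha => lt_of_le_of_ne a.isLt fun h => ha ?_⟩
  · have := Fin.val_add_one_of_lt' h
    rw [ha, neg_add_cancel, Fin.val_zero] at this
    omega
  · rw [eq_neg_iff_add_eq_zero, Fin.ext_iff, Fin.val_add, Fin.val_one', Nat.add_mod_mod, h]
    simp

theorem map_valEmbedding_subset_range {S : Finset (Fin N)} (hS : (-1 : Fin N) ∉ S) :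
    S.map Fin.valEmbedding ⊆ range (N - 1) := by
  intro x hx
  obtain ⟨a, ha, rfl⟩ := mem_map.1 hx
  have := val_add_one_lt_iff_ne_neg_one.2 (ne_of_mem_of_not_mem ha hS)
  simp only [Fin.valEmbedding_apply, mem_range]
  omega

theorem card_filter_neg_one_notMem (m b : ℕ) :
    #{S : Finset (Fin N) | (#S = m ∧ S.runCount = b) ∧ -1 ∉ S} = lineCount (N - 1) m b := by
  have runCount_map_val : ∀ S : Finset (Fin N), (∀ a ∈ S, a.val + 1 < N) →
      (S.map Fin.valEmbedding).runCount = S.runCount := fun S hS =>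
    runCount_map Fin.valEmbedding fun a ha => Fin.val_add_one_of_lt' (hS a ha)
  refine card_nbij' (·.map Fin.valEmbedding)
    (fun T : Finset ℕ => ({a | a.val ∈ T} : Finset (Fin N))) ?_ ?_ ?_ ?_
  · intro S hS
    simp only [coe_filter, mem_univ, true_and, Set.mem_ofPred_eq] at hS ⊢
    obtain ⟨⟨hcard, hruns⟩, hS⟩ := hS
    rw [mem_powersetCard, card_map, hcard, runCount_map_val S fun a ha =>
      val_add_one_lt_iff_ne_neg_one.2 (ne_of_mem_of_not_mem ha hS), hruns]
    exact ⟨⟨map_valEmbedding_subset_range hS, rfl⟩, rfl⟩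
  · intro T hT
    simp only [coe_filter, mem_powersetCard, Set.mem_ofPred_eq] at hT
    obtain ⟨⟨hsub, hcard⟩, hruns⟩ := hT
    have hT : T ⊆ range N := hsub.trans (range_subset_range.2 (Nat.sub_le N 1))
    have hlt : ∀ a ∈ ({a | a.val ∈ T} : Finset (Fin N)), a.val + 1 < N := fun a ha => by
      have := mem_range.1 (hsub (mem_filter.1 ha).2); omega
    rw [mem_coe, mem_filter]
    refine ⟨mem_univ _, ⟨?_, ?_⟩, fun h => val_add_one_lt_iff_ne_neg_one.1 (hlt _ h) rfl⟩
    · rw [← card_map Fin.valEmbedding, map_valEmbedding_filter_val_mem hT, hcard]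
    · rw [← runCount_map_val _ hlt, map_valEmbedding_filter_val_mem hT, hruns]
  · intro S _
    ext a
    simp [Fin.val_inj]
  · intro T hT
    refine map_valEmbedding_filter_val_mem ((mem_powersetCard.1 (mem_filter.1 hT).1).1.trans ?_)
    exact range_subset_range.2 (Nat.sub_le N 1)

theorem cyclicCount_mul (m b : ℕ) :
    cyclicCount N m b * (N - m) = N * lineCount (N - 1) m b := by
  have := card_mul_eq_card_mul (fun (S : Finset (Fin N)) (p : Fin N) => p ∉ S)
    (s := {S : Finset (Fin N) | #S = m ∧ S.runCount = b}) (t := univ) (m := N - m)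
    (n := lineCount (N - 1) m b) ?_ ?_
  · simpa [cyclicCount] using this
  · intro S hS
    have : univ.bipartiteAbove (fun S p => p ∉ S) S = Sᶜ := by ext; simp [bipartiteAbove]
    rw [this, card_compl, Fintype.card_fin, (mem_filter.1 hS).2.1]
  · intro p _
    rw [bipartiteBelow, filter_filter, card_filter_notMem_eq m b p (-1),
      card_filter_neg_one_notMem]

end Cyclic

instance : InvolutiveNeg ({-1, 1} : Finset ℤ) where
  neg x := ⟨-x, by obtain ⟨x, hx⟩ := x; simp only [mem_insert, mem_singleton] at hx ⊢; omega⟩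
  neg_neg x := Subtype.ext (neg_neg (x : ℤ))

@[simp]
theorem coe_neg_sign (x : ({-1, 1} : Finset ℤ)) : ((-x : ({-1, 1} : Finset ℤ)) : ℤ) = -x := rfl

theorem sign_eq_neg_one_or_one (x : ({-1, 1} : Finset ℤ)) : (x : ℤ) = -1 ∨ (x : ℤ) = 1 := by
  simpa only [mem_insert, mem_singleton] using x.2

namespace MVAssign

variable {n : ℕ}

def flipFace [NeZero n] (μ : MVAssign n) (k : Fin (2 * n)) : MVAssign n :=
  fun i => if i = k ∨ i = k + 1 then -μ i else μ i

def minusSet (μ : MVAssign n) : Finset (Fin (2 * n)) := {i | (μ i : ℤ) = -1}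

theorem sum_eq_sub_card_minusSet (μ : MVAssign n) : ∑ i, (μ i : ℤ) = 2 * n - 2 * #μ.minusSet := by
  have hμ : ∀ i, (μ i : ℤ) = 1 - 2 * if i ∈ μ.minusSet then 1 else 0 := fun i => by
    rcases sign_eq_neg_one_or_one (μ i) with h | h <;> simp [minusSet, h]
  simp only [hμ, sum_sub_distrib, ← mul_sum, sum_boole, filter_mem_eq_inter, univ_inter]
  simp

theorem sum_neg (μ : MVAssign n) : ∑ i, ((-μ) i : ℤ) = -∑ i, (μ i : ℤ) := by
  simp [Pi.neg_apply]

theorem mvValid_neg {μ : MVAssign n} : MVValid (-μ) ↔ MVValid μ := by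
  simp only [MVValid, sum_neg]
  omega

def ofMinusSet (S : Finset (Fin (2 * n))) : MVAssign n :=
  fun i => if i ∈ S then ⟨-1, by simp⟩ else ⟨1, by simp⟩

theorem minusSet_ofMinusSet (S : Finset (Fin (2 * n))) : (ofMinusSet S).minusSet = S := by
  ext i
  simp only [minusSet, mem_filter, mem_univ, true_and]
  by_cases h : i ∈ S <;> simp [ofMinusSet, h]

theorem minusSet_injective : Function.Injective (minusSet (n := n)) := by
  intro μ ν h
  ext i : 1
  have hi : (μ i : ℤ) = -1 ↔ (ν i : ℤ) = -1 := by
    simpa [minusSet] using congrArg (i ∈ ·) h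
  apply Subtype.ext
  rcases sign_eq_neg_one_or_one (μ i) with h1 | h1 <;>
    rcases sign_eq_neg_one_or_one (ν i) with h2 | h2 <;> simp_all

section flipFace

variable [NeZero n]

theorem flipFace_neg (μ : MVAssign n) (k : Fin (2 * n)) : (-μ).flipFace k = -μ.flipFace k := by
  ext i
  simp only [flipFace, Pi.neg_apply]
  split_ifs <;> rfl

theorem sum_flipFace (μ : MVAssign n) (k : Fin (2 * n)) :
    ∑ i, (μ.flipFace k i : ℤ) = ∑ i, (μ i : ℤ) - 2 * (μ k + μ (k + 1)) := by
  have hdiff : ∀ i, (μ.flipFace k i : ℤ)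
      = μ i - if i ∈ ({k, k + 1} : Finset _) then 2 * (μ i : ℤ) else 0 := fun i => by
    by_cases h : i = k ∨ i = k + 1
    · rw [flipFace, if_pos h, if_pos (by simpa using h), coe_neg_sign]
      ring
    · simp [flipFace, h]
  have : Nontrivial (Fin (2 * n)) := Fin.nontrivial_iff_two_le.2 (by have := NeZero.ne n; omega)
  rw [sum_congr rfl fun i _ => hdiff i, sum_sub_distrib, sum_ite_mem, univ_inter,
    sum_pair (by simp), mul_add]

theorem mvValid_flipFace_iff {μ : MVAssign n} (hμ : ∑ i, (μ i : ℤ) = 2) (k : Fin (2 * n)) :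
    MVValid (μ.flipFace k) ↔ ¬(k ∈ μ.minusSet ∧ k + 1 ∈ μ.minusSet) := by
  simp only [MVValid, sum_flipFace, hμ, minusSet, mem_filter, mem_univ, true_and]
  rcases sign_eq_neg_one_or_one (μ k) with h | h <;>
    rcases sign_eq_neg_one_or_one (μ (k + 1)) with h' | h' <;> simp [h, h']

theorem flipFace_ne_iff (μ : MVAssign n) (k i : Fin (2 * n)) :
    μ.flipFace k i ≠ μ i ↔ i = k ∨ i = k + 1 := by
  by_cases h : i = k ∨ i = k + 1
  · rcases sign_eq_neg_one_or_one (μ i) with h' | h' <;> simp [flipFace, h, Subtype.ext_iff, h']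
  · simp [flipFace, h]

theorem flipFace_injective (hn : 2 ≤ n) (μ : MVAssign n) : Function.Injective μ.flipFace := by
  intro k k' h
  have hk : ∀ i, i = k ∨ i = k + 1 ↔ i = k' ∨ i = k' + 1 := fun i => by
    rw [← flipFace_ne_iff μ k, ← flipFace_ne_iff μ k', h]
  by_contra hne
  have h1 : k = k' + 1 := ((hk k).1 (Or.inl rfl)).resolve_left hne
  have h2 : k' = k + 1 := ((hk k').2 (Or.inl rfl)).resolve_left (Ne.symm hne)
  have htwo : (1 + 1 : Fin (2 * n)) = 0 :=
    add_left_cancel (a := k) (by rw [add_zero, ← add_assoc, ← h2, ← h1])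
  have := congrArg Fin.val htwo
  rw [Fin.val_add, Fin.val_one', Nat.mod_eq_of_lt (by omega : 1 < 2 * n), Fin.val_zero,
    Nat.mod_eq_of_lt (by omega : 2 < 2 * n)] at this
  omega

end flipFace

end MVAssign

namespace OFG

variable {n : ℕ}

instance : InvolutiveNeg (OFGVertex n) where
  neg a := ⟨-a.1, MVAssign.mvValid_neg.2 a.2⟩
  neg_neg a := Subtype.ext (neg_neg a.1)

theorem nextCrease_eq_add_one [NeZero n] (k : Fin (2 * n)) : nextCrease k = k + 1 := by
  ext
  simp [nextCrease, Fin.val_add]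

theorem adj_iff [NeZero n] {a b : OFGVertex n} :
    (OFG n).Adj a b ↔ ∃ k, b.1 = a.1.flipFace k := by
  simp only [OFG, funext_iff, Subtype.ext_iff, MVAssign.flipFace, nextCrease_eq_add_one]
  refine exists_congr fun k => forall_congr' fun i => ?_
  split_ifs <;> rfl

theorem ncard_neighborSet_eq [NeZero n] (hn : 2 ≤ n) (a : OFGVertex n) :
    ((OFG n).neighborSet a).ncard = #{k | MVValid (a.1.flipFace k)} := by
  let f : {k // MVValid (a.1.flipFace k)} → OFGVertex n := fun k => ⟨a.1.flipFace k, k.2⟩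
  have hf : Function.Injective f := fun k k' h =>
    Subtype.ext (MVAssign.flipFace_injective hn a.1 (congrArg Subtype.val h))
  have hrange : (OFG n).neighborSet a = Set.range f := by
    ext b
    simp only [SimpleGraph.mem_neighborSet, adj_iff, Set.mem_range, f, Subtype.ext_iff]
    exact ⟨fun ⟨k, hk⟩ => ⟨⟨k, hk ▸ b.2⟩, hk.symm⟩, fun ⟨k, hk⟩ => ⟨k, hk.symm⟩⟩
  rw [hrange, Set.ncard_range_of_injective hf, Nat.card_eq_fintype_card, Fintype.card_subtype]

theorem ncard_neighborSet_neg [NeZero n] (hn : 2 ≤ n) (a : OFGVertex n) :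
    ((OFG n).neighborSet (-a)).ncard = ((OFG n).neighborSet a).ncard := by
  rw [ncard_neighborSet_eq hn, ncard_neighborSet_eq hn]
  refine congrArg card (filter_congr fun k _ => ?_)
  exact (congrArg MVValid (MVAssign.flipFace_neg a.1 k)).to_iff.trans MVAssign.mvValid_neg

/-- When `∑ μ = 2`, a face can be flipped unless both of its creases lie in `minusSet`, and a
run of `r` such creases blocks `r - 1` faces. -/
theorem ncard_neighborSet_of_sum_eq_two [NeZero n] (hn : 2 ≤ n) {a : OFGVertex n}
    (ha : ∑ i, (a.1 i : ℤ) = 2) :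
    ((OFG n).neighborSet a).ncard = n + 1 + a.1.minusSet.runCount := by
  have hcard : #a.1.minusSet + 1 = n := by
    have := MVAssign.sum_eq_sub_card_minusSet a.1
    omega
  have := a.1.minusSet.card_filter_not_and_add_one_mem
  rw [Fintype.card_fin] at this
  rw [ncard_neighborSet_eq hn]
  simp only [MVAssign.mvValid_flipFace_iff ha]
  omega

theorem card_degree_eq_and_sum_eq_two [NeZero n] (hn : 2 ≤ n) (b : ℕ) :
    #{a : OFGVertex n | ((OFG n).neighborSet a).ncard = n + 1 + b ∧ ∑ i, (a.1 i : ℤ) = 2}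
      = cyclicCount (2 * n) (n - 1) b := by
  refine card_bij (fun a _ => a.1.minusSet) ?_ ?_ ?_
  · intro a ha
    simp only [mem_filter, mem_univ, true_and] at ha ⊢
    obtain ⟨hdeg, hsum⟩ := ha
    have := MVAssign.sum_eq_sub_card_minusSet a.1
    rw [ncard_neighborSet_of_sum_eq_two hn hsum] at hdeg
    omega
  · exact fun a _ a' _ h => Subtype.ext (MVAssign.minusSet_injective h)
  · intro S hS
    simp only [mem_filter, mem_univ, true_and] at hS
    have hsum : ∑ i, (MVAssign.ofMinusSet S i : ℤ) = 2 := by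
      rw [MVAssign.sum_eq_sub_card_minusSet, MVAssign.minusSet_ofMinusSet, hS.1]
      omega
    refine ⟨⟨_, Or.inl hsum⟩, ?_, MVAssign.minusSet_ofMinusSet S⟩
    simp only [mem_filter, mem_univ, true_and]
    rw [ncard_neighborSet_of_sum_eq_two hn hsum, MVAssign.minusSet_ofMinusSet, hS.2]
    exact ⟨rfl, hsum⟩

theorem ncard_setOf_degree_eq [NeZero n] (hn : 2 ≤ n) (b : ℕ) :
    {a : OFGVertex n | ((OFG n).neighborSet a).ncard = n + 1 + b}.ncard
      = 2 * cyclicCount (2 * n) (n - 1) b := by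
  rw [Set.ncard_eq_toFinset_card', Set.toFinset_ofPred,
    ← card_filter_add_card_filter_not (p := fun a : OFGVertex n => ∑ i, (a.1 i : ℤ) = 2),
    filter_filter, filter_filter, ← card_degree_eq_and_sum_eq_two hn]
  refine (congrArg (_ + ·) ?_).trans (two_mul _).symm
  refine card_equiv (Equiv.neg _) fun a => ?_
  have hsum : ∑ i, ((-a).1 i : ℤ) = -∑ i, (a.1 i : ℤ) := MVAssign.sum_neg a.1
  have := a.2
  simp only [MVValid] at this
  simp only [mem_filter, mem_univ, true_and, Equiv.neg_apply, ncard_neighborSet_neg hn, hsum]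
  omega

end OFG

theorem stmt_12_general (n k : ℕ) (hn : 2 ≤ n) (hk₁ : n + 2 ≤ k) :
    (({a : OFGVertex n | ((OFG n).neighborSet a).ncard = k} : Set (OFGVertex n)).ncard : ℚ)
      = (4 * n / (n + 1)) * (Nat.choose (n + 1) (k - n - 1))
          * (Nat.choose (n - 2) (k - n - 2)) := by
  have : NeZero n := ⟨by omega⟩
  obtain ⟨m, rfl⟩ : ∃ m, n = m + 2 := ⟨n - 2, by omega⟩
  obtain ⟨b, rfl⟩ : ∃ b, k = m + 2 + 1 + (b + 1) := ⟨k - m - 4, by omega⟩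
  have hcount := cyclicCount_mul (N := 2 * (m + 2)) (m + 1) (b + 1)
  rw [show 2 * (m + 2) - 1 = m + 1 + (m + 2) by omega, lineCount_add] at hcount
  rw [OFG.ncard_setOf_degree_eq hn, show m + 2 - 1 = m + 1 by omega,
    show m + 2 + 1 + (b + 1) - (m + 2) - 1 = b + 1 by omega,
    show m + 2 + 1 + (b + 1) - (m + 2) - 2 = b by omega, show m + 2 - 2 = m by omega]
  rw [show 2 * (m + 2) - (m + 1) = m + 3 by omega] at hcount
  have hq : (cyclicCount (2 * (m + 2)) (m + 1) (b + 1) : ℚ) * (m + 3)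
      = 2 * (m + 2) * (m.choose b * (m + 3).choose (b + 1)) := by exact_mod_cast hcount
  push_cast
  field_simp
  linear_combination 2 * hq

/-- For `n ≥ 2` and `n+2 ≤ k ≤ 2n`, the number of valid MV assignments of
`A_{2n}` of degree exactly `k` in `OFG(A_{2n})` is
`(4n/(n+1)) · C(n+1, k-n-1) · C(n-2, k-n-2)`. -/
theorem stmt_12 (n k : ℕ) (hn : 2 ≤ n) (hk₁ : n + 2 ≤ k) (hk₂ : k ≤ 2 * n) :
    (({a : OFGVertex n | ((OFG n).neighborSet a).ncard = k} : Set (OFGVertex n)).ncard : ℚ)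
      = (4 * n / (n + 1)) * (Nat.choose (n + 1) (k - n - 1))
          * (Nat.choose (n - 2) (k - n - 2)) :=
  stmt_12_general n k hn hk₁
end
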